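/- arXiv:2210.07520 — 2 statements merged into one kernel-verified Lean document; each statement's English description precedes it below -/
import Mathlib

section
/- If the defining ideal I(S) is generic, i.e., every variable z_1,…,z_{d+r} belongs to the support of every binomial in a minimal binomial generating set of I(S), then every element of the Apéry set AP(S,E) has a unique factorization in terms of the generators of S; in particular S is homogeneous. -/
open MvPolynomial CategoryTheory

set_option maxHeartbeats 1000000
set_option synthInstance.maxHeartbeats 400000

noncomputable section

namespace AffineSG

/-- The total degree of an exponent vector. -/
def edeg {n : ℕ} (u : Fin n →₀ ℕ) : ℕ := u.sum fun _ e => e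

/-- `ndrlGT u v` means that the monomial with exponent vector `u` is strictly greater than
the one with exponent vector `v` in the negative degree reverse lexicographic order induced by
`z_n > ⋯ > z_1` (the variable with larger index is the larger variable). -/
def ndrlGT {n : ℕ} (u v : Fin n →₀ ℕ) : Prop :=
  edeg u < edeg v ∨
    (edeg u = edeg v ∧ ∃ i : Fin n, u i < v i ∧ ∀ j : Fin n, j < i → u j = v j)

/-- `IsLM f m` : the exponent vector `m` is the leading monomial of `f` with respect to the
negative degree reverse lexicographic order. -/
def IsLM {n : ℕ} {k : Type} [Field k] (f : MvPolynomial (Fin n) k) (m : Fin n →₀ ℕ) : Prop :=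
  m ∈ f.support ∧ ∀ m' ∈ f.support, m' ≠ m → ndrlGT m m'

/-- `G` is a Gröbner (standard) basis of `I` with respect to the negative degree reverse
lexicographic order: `G ⊆ I` and the leading monomial of every nonzero element of `I` is
divisible by the leading monomial of some element of `G`. -/
def IsGroebnerBasis {n : ℕ} {k : Type} [Field k] (G : Finset (MvPolynomial (Fin n) k))
    (I : Ideal (MvPolynomial (Fin n) k)) : Prop :=
  (↑G : Set (MvPolynomial (Fin n) k)) ⊆ (I : Set (MvPolynomial (Fin n) k)) ∧
    ∀ f ∈ I, f ≠ 0 → ∃ g ∈ G, ∃ mg mf, IsLM g mg ∧ IsLM f mf ∧ mg ≤ mf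

/-- A minimal Gröbner basis: a Gröbner basis consisting of nonzero polynomials no leading
monomial of which divides the leading monomial of another element. -/
def IsMinimalGroebnerBasis {n : ℕ} {k : Type} [Field k] (G : Finset (MvPolynomial (Fin n) k))
    (I : Ideal (MvPolynomial (Fin n) k)) : Prop :=
  IsGroebnerBasis G I ∧ (0 : MvPolynomial (Fin n) k) ∉ G ∧
    ∀ g ∈ G, ∀ g' ∈ G, g ≠ g' → ∀ mg mg', IsLM g mg → IsLM g' mg' → ¬ mg ≤ mg'

/-- The toric ideal (defining ideal) attached to a family `g` of lattice points in `ℕ^d`: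
the kernel of `z_i ↦ x^{g i}`. -/
def famIdeal (k : Type) [Field k] {n d : ℕ} (g : Fin n → (Fin d → ℕ)) :
    Ideal (MvPolynomial (Fin n) k) :=
  RingHom.ker (MvPolynomial.aeval
    (fun i => MvPolynomial.monomial (Finsupp.equivFunOnFinite.symm (g i)) (1 : k)) :
      MvPolynomial (Fin n) k →ₐ[k] MvPolynomial (Fin d) k)

/-- A simplicial affine semigroup fully embedded in `ℕ^d`, minimally generated by
`gen 0, …, gen (d+r-1)`, whose set of extremal rays consists of the first `d` generators. -/
structure SimplicialAffineSemigroup (d r : ℕ) where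
  gen : Fin (d + r) → (Fin d → ℕ)
  gen_ne_zero : ∀ i, gen i ≠ 0
  li : LinearIndependent ℚ (fun (i : Fin d) (j : Fin d) => ((gen (Fin.castAdd r i) j : ℚ)))
  cone : ∀ i : Fin (d + r), ∃ c : Fin d → ℚ, (∀ j, 0 ≤ c j) ∧
    (fun j => (gen i j : ℚ)) = ∑ j : Fin d, c j • (fun l => (gen (Fin.castAdd r j) l : ℚ))
  minimal : ∀ i, gen i ∉ AddSubmonoid.closure (Set.range gen \ {gen i})

namespace SimplicialAffineSemigroup

variable {d r : ℕ}

/-- The underlying semigroup (as a set): the additive submonoid generated by the generators. -/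
def mem (S : SimplicialAffineSemigroup d r) (s : Fin d → ℕ) : Prop :=
  s ∈ AddSubmonoid.closure (Set.range S.gen)

/-- The defining ideal `I(S)` of the semigroup ring `k[S]`. -/
def definingIdeal (k : Type) [Field k] (S : SimplicialAffineSemigroup d r) :
    Ideal (MvPolynomial (Fin (d + r)) k) :=
  famIdeal k S.gen

end SimplicialAffineSemigroup

/-- The smallest degree of a monomial appearing in `f`. -/
def minDeg {n : ℕ} {k : Type} [Field k] (f : MvPolynomial (Fin n) k) : ℕ :=
  sInf (edeg '' (f.support : Set (Fin n →₀ ℕ)))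

/-- The initial form `f*` of `f`: the homogeneous component of least degree of `f`. -/
def initialForm {n : ℕ} {k : Type} [Field k] (f : MvPolynomial (Fin n) k) :
    MvPolynomial (Fin n) k :=
  MvPolynomial.homogeneousComponent (minDeg f) f

/-- `I*`, the ideal generated by the initial forms of the elements of `I`;
one has `gr_𝔪(A/I) ≅ A/I*`. -/
def starIdeal {n : ℕ} {k : Type} [Field k] (I : Ideal (MvPolynomial (Fin n) k)) :
    Ideal (MvPolynomial (Fin n) k) :=
  Ideal.span { g | ∃ f ∈ I, f ≠ 0 ∧ g = initialForm f }

/-- A finite set `J ⊆ I` is a standard basis of `I` if the initial forms of its elements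
generate `I*`. -/
def IsStandardBasis {n : ℕ} {k : Type} [Field k] (J : Finset (MvPolynomial (Fin n) k))
    (I : Ideal (MvPolynomial (Fin n) k)) : Prop :=
  (↑J : Set (MvPolynomial (Fin n) k)) ⊆ (I : Set (MvPolynomial (Fin n) k)) ∧
    starIdeal I = Ideal.span (initialForm '' (↑J : Set (MvPolynomial (Fin n) k)))

/-- The ideal of a commutative ring generated by the images of the variables under the
quotient map; for `A/I` this is the distinguished (graded) maximal ideal `𝔪`. -/
def quotMax {n : ℕ} {k : Type} [Field k] (I : Ideal (MvPolynomial (Fin n) k)) :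
    Ideal (MvPolynomial (Fin n) k ⧸ I) :=
  Ideal.map (Ideal.Quotient.mk I) (Ideal.span (Set.range (MvPolynomial.X : Fin n → MvPolynomial (Fin n) k)))

/-- `J` is a reduction ideal of `I`: `J ⊆ I` and `J I^n = I^{n+1}` for all large `n`. -/
def IsReductionIdeal {R : Type} [CommRing R] (J I : Ideal R) : Prop :=
  J ≤ I ∧ ∃ N : ℕ, ∀ n ≥ N, J * I ^ n = I ^ (n + 1)

/-- A commutative ring `R` with distinguished (maximal) ideal `m` is Cohen–Macaulay if
there is a regular sequence on `R` consisting of elements of `m` whose length is the Krull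
dimension of `R`. -/
def IsCM (R : Type) [CommRing R] (m : Ideal R) : Prop :=
  ∃ rs : List R, (∀ x ∈ rs, x ∈ m) ∧ RingTheory.Sequence.IsRegular R rs ∧
    ringKrullDim R = rs.length

/-- The depth of `R` with respect to the ideal `m`: the supremum of the lengths of regular
sequences on `R` consisting of elements of `m`. -/
def ringDepth (R : Type) [CommRing R] (m : Ideal R) : ℕ∞ :=
  sSup ((fun rs : List R => (rs.length : ℕ∞)) ''
    { rs : List R | (∀ x ∈ rs, x ∈ m) ∧ RingTheory.Sequence.IsRegular R rs })

/-- The length of a module, realized as the Krull dimension of its lattice of submodules. -/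
def moduleLength (R M : Type) [CommRing R] [AddCommGroup M] [Module R M] : WithBot ℕ∞ :=
  Order.krullDim (Submodule R M)

/-- The `i`-th Betti number of the `R`-module `M` with respect to the distinguished maximal
ideal `m`, namely the length of `Tor_i^R(R/m, M)`. -/
def bettiNumber (R : Type) [CommRing R] (m : Ideal R) (M : Type) [AddCommGroup M] [Module R M]
    (i : ℕ) : WithBot ℕ∞ :=
  moduleLength R (((Tor (ModuleCat R) i).obj (ModuleCat.of R (R ⧸ m))).obj (ModuleCat.of R M))

/-- The height of an ideal. -/
def idealHeight {R : Type} [CommRing R] (I : Ideal R) : ℕ∞ :=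
  sInf { n : ℕ∞ | ∃ p : PrimeSpectrum R, I ≤ p.asIdeal ∧ n = Order.height p }

/-- The minimal number of generators of an ideal. -/
def mu {R : Type} [CommRing R] (I : Ideal R) : ℕ∞ :=
  sInf { n : ℕ∞ | ∃ s : Finset R, (s.card : ℕ∞) = n ∧ Ideal.span (↑s : Set R) = I }

/-- An ideal `I` of a polynomial ring is a complete intersection if its height equals its
minimal number of generators. -/
def IsCompleteIntersectionIdeal {R : Type} [CommRing R] (I : Ideal R) : Prop :=
  idealHeight I = mu I


/-- `p` is a factorization of `s` in terms of the generating family `g`. -/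
def FamFactorization {n d : ℕ} (g : Fin n → (Fin d → ℕ)) (p : Fin n → ℕ) (s : Fin d → ℕ) :
    Prop :=
  ∑ i, p i • g i = s

/-- `s` belongs to the affine semigroup generated by the family `g`. -/
def FamMem {n d : ℕ} (g : Fin n → (Fin d → ℕ)) (s : Fin d → ℕ) : Prop :=
  ∃ p, FamFactorization g p s

/-- `s` belongs to the Apéry set `AP(S,E)` of the semigroup generated by `g`, where the set of
extremal rays `E` consists of the first `d` members of the family. -/
def FamApery {d m : ℕ} (g : Fin (d + m) → (Fin d → ℕ)) (s : Fin d → ℕ) : Prop :=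
  FamMem g s ∧ ∀ i : Fin d, ¬ ∃ t, FamMem g t ∧ t + g (Fin.castAdd m i) = s

/-- The semigroup generated by `g` (first `d` members extremal rays) is homogeneous: every
nonzero element of the Apéry set with respect to the extremal rays has all its factorizations
of the same length. -/
def FamHomogeneous {d m : ℕ} (g : Fin (d + m) → (Fin d → ℕ)) : Prop :=
  ∀ s, FamApery g s → s ≠ 0 → ∀ p q, FamFactorization g p s → FamFactorization g q s →
    ∑ i, p i = ∑ i, q i

/-- `p` is a maximal factorization: no factorization of the same semigroup element has
strictly larger length (so the length of `p` is the order of the element). -/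
def IsMaximalFactorization {n d : ℕ} (g : Fin n → (Fin d → ℕ)) (p : Fin n → ℕ) : Prop :=
  ∀ q, FamFactorization g q (∑ i, p i • g i) → ∑ i, q i ≤ ∑ i, p i

/-- The projection `π_e` killing the `e` smallest variables `z_1, …, z_e`. -/
def proj (k : Type) [Field k] (n e : ℕ) :
    MvPolynomial (Fin n) k →ₐ[k] MvPolynomial (Fin (n - e)) k :=
  MvPolynomial.aeval fun j : Fin n =>
    if hj : e ≤ (j : ℕ) then
      MvPolynomial.X (⟨(j : ℕ) - e, by have := j.isLt; omega⟩ : Fin (n - e))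
    else 0

/-- The generating family of the extension `S_b = λS ∪ {μb}` of the semigroup generated by
`g`, where `b = Σ α_i g i`. -/
def extFam {d r : ℕ} (g : Fin (d + r) → (Fin d → ℕ)) (α : Fin (d + r) → ℕ) (lam mu : ℕ) :
    Fin (d + (r + 1)) → (Fin d → ℕ) :=
  Fin.snoc (fun i => lam • g i) (mu • ∑ i, α i • g i)

/-- Generating families of simplicial affine semigroups obtained from `ℕ^d` by a finite
sequence of nice extensions. -/
inductive NiceSeq (d : ℕ) : ∀ r : ℕ, (Fin (d + r) → (Fin d → ℕ)) → Prop
  | base : NiceSeq d 0 (fun i j => if (i : ℕ) = (j : ℕ) then 1 else 0)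
  | step {r : ℕ} {g : Fin (d + r) → (Fin d → ℕ)} (α : Fin (d + r) → ℕ) (lam mu : ℕ)
      (hg : NiceSeq d r g) (hco : Nat.Coprime lam mu) (hnice : lam ≤ ∑ i, α i) :
      NiceSeq d (r + 1) (extFam g α lam mu)


/-- The ideal of `A/I` generated by the images of the variables corresponding to the
extremal rays (the first `d` variables). -/
def quotExtremal (d r : ℕ) (k : Type) [Field k] (I : Ideal (MvPolynomial (Fin (d + r)) k)) :
    Ideal (MvPolynomial (Fin (d + r)) k ⧸ I) :=
  Ideal.map (Ideal.Quotient.mk I)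
    (Ideal.span (Set.range fun i : Fin d =>
      (MvPolynomial.X (Fin.castAdd r i) : MvPolynomial (Fin (d + r)) k)))

end AffineSG

/-! If `s ∈ AP(S,E)` had two factorizations `p ≠ q`, the binomial `z^p - z^q` would lie in
`I(S)`, so `z^p` would be divisible by a monomial `z^a` of some binomial `z^a - z^b` of the
generating set. Then `p - a + b` is again a factorization of `s`. As no factorization of an
element of the Apéry set involves an extremal generator, neither `z^a` nor `z^b` involves an
extremal variable, contradicting genericity. -/

namespace MvPolynomial

theorem exists_le_of_mem_support_of_mem_ideal_span {σ R : Type*} [CommSemiring R]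
    {B : Set (MvPolynomial σ R)} {x : MvPolynomial σ R} (hx : x ∈ Ideal.span B)
    {m : σ →₀ ℕ} (hm : m ∈ x.support) : ∃ f ∈ B, ∃ m' ∈ f.support, m' ≤ m := by
  have hle : Ideal.span B ≤
      Ideal.span ((fun s => monomial s (1 : R)) '' {m' | ∃ f ∈ B, m' ∈ f.support}) :=
    Ideal.span_le.2 fun f hf =>
      mem_ideal_span_monomial_image.2 fun m' hm' => ⟨m', ⟨f, hf, hm'⟩, le_rfl⟩
  obtain ⟨m', ⟨f, hf, hm'⟩, hle'⟩ := mem_ideal_span_monomial_image.1 (hle hx) m hm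
  exact ⟨f, hf, m', hm', hle'⟩

section Binomial

variable {σ k : Type*} [Field k] [DecidableEq σ] {a b : σ →₀ ℕ}

theorem support_monomial_sub_monomial_subset :
    (monomial a (1 : k) - monomial b 1).support ⊆ {a, b} := by
  refine (support_sub _ _ _).trans (Finset.union_subset ?_ ?_) <;>
    exact (support_monomial_subset).trans (by simp)

theorem left_mem_support_monomial_sub_monomial (hab : a ≠ b) :
    a ∈ (monomial a (1 : k) - monomial b 1).support := by
  simp [coeff_monomial, hab.symm]

theorem vars_monomial_sub_monomial_subset :
    (monomial a (1 : k) - monomial b 1).vars ⊆ a.support ∪ b.support := by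
  refine (vars_sub_subset _).trans ?_
  rw [vars_monomial one_ne_zero, vars_monomial one_ne_zero]

end Binomial

end MvPolynomial

open MvPolynomial

namespace AffineSG

-- The ascription elaborates `aeval` exactly as in `famIdeal`, so that `rw` finds it there.
theorem aeval_monomial_one_eq_monomial_sum {n d : ℕ} {k : Type} [Field k]
    (g : Fin n → Fin d → ℕ) (a : Fin n →₀ ℕ) :
    (aeval (fun i => monomial (Finsupp.equivFunOnFinite.symm (g i)) (1 : k)) :
      MvPolynomial (Fin n) k →ₐ[k] MvPolynomial (Fin d) k) (monomial a 1) =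
      monomial (Finsupp.equivFunOnFinite.symm (∑ i, a i • g i)) 1 := by
  rw [aeval_monomial, map_one, one_mul, Finsupp.prod_fintype _ _ (fun i => pow_zero _)]
  simp_rw [monomial_pow, one_pow, ← monomial_sum_one]
  congr 2
  exact Finsupp.ext fun j => by simp [Finsupp.finsetSum_apply, Finset.sum_apply]

theorem monomial_sub_monomial_mem_famIdeal_iff {n d : ℕ} {k : Type} [Field k]
    {g : Fin n → Fin d → ℕ} {a b : Fin n →₀ ℕ} :
    monomial a (1 : k) - monomial b 1 ∈ famIdeal k g ↔
      ∑ i, a i • g i = ∑ i, b i • g i := by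
  rw [famIdeal, RingHom.mem_ker, map_sub, aeval_monomial_one_eq_monomial_sum,
    aeval_monomial_one_eq_monomial_sum, sub_eq_zero, (monomial_left_injective one_ne_zero).eq_iff, Equiv.apply_eq_iff_eq]

theorem FamFactorization.exchange {n d : ℕ} {g : Fin n → Fin d → ℕ} {p a b : Fin n → ℕ}
    {s : Fin d → ℕ} (hp : FamFactorization g p s) (hle : a ≤ p)
    (hab : ∑ i, a i • g i = ∑ i, b i • g i) : FamFactorization g (p - a + b) s := by
  unfold FamFactorization at *
  calc ∑ i, (p - a + b) i • g i = ∑ i, (p - a) i • g i + ∑ i, b i • g i := by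
        simp only [Pi.add_apply, add_smul, Finset.sum_add_distrib]
    _ = ∑ i, ((p - a) i + a i) • g i := by
        rw [← hab]; simp only [add_smul, Finset.sum_add_distrib]
    _ = s := by simp only [Pi.sub_apply, tsub_add_cancel_of_le (hle _), hp]

theorem FamApery.apply_castAdd_eq_zero {d m : ℕ} {g : Fin (d + m) → Fin d → ℕ} {s : Fin d → ℕ}
    (hs : FamApery g s) {p : Fin (d + m) → ℕ} (hp : FamFactorization g p s) (j : Fin d) :
    p (Fin.castAdd m j) = 0 := by
  by_contra h
  refine hs.2 j ⟨_, ⟨p - Pi.single (Fin.castAdd m j) 1, rfl⟩, ?_⟩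
  have hsplit : p = (p - Pi.single (Fin.castAdd m j) 1) + Pi.single (Fin.castAdd m j) 1 := by
    ext i
    by_cases hi : i = Fin.castAdd m j
    · subst hi
      simp only [Pi.add_apply, Pi.sub_apply, Pi.single_eq_same]
      omega
    · simp [hi]
  conv_rhs => rw [← hp, hsplit]
  simp [add_smul, Finset.sum_add_distrib, Pi.single_apply]

theorem FamApery.apply_castAdd_eq_zero_of_exchange {d m : ℕ} {g : Fin (d + m) → Fin d → ℕ}
    {s : Fin d → ℕ} (hs : FamApery g s) {p a b : Fin (d + m) → ℕ} (hp : FamFactorization g p s)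
    (hle : a ≤ p) (hab : ∑ i, a i • g i = ∑ i, b i • g i) (j : Fin d) :
    a (Fin.castAdd m j) = 0 ∧ b (Fin.castAdd m j) = 0 := by
  have hp0 := hs.apply_castAdd_eq_zero hp j
  have hexch0 := hs.apply_castAdd_eq_zero (hp.exchange hle hab) j
  have hle0 : a (Fin.castAdd m j) ≤ p (Fin.castAdd m j) := hle _
  simp only [Pi.add_apply, Pi.sub_apply] at hexch0
  omega

theorem FamApery.factorization_unique {d m : ℕ} {k : Type} [Field k]
    {g : Fin (d + m) → Fin d → ℕ} {B : Set (MvPolynomial (Fin (d + m)) k)}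
    (hbin : ∀ f ∈ B, ∃ a b : Fin (d + m) →₀ ℕ, f = monomial a 1 - monomial b 1)
    (hspan : Ideal.span B = famIdeal k g)
    (hextremal : ∀ f ∈ B, ∃ j : Fin d, Fin.castAdd m j ∈ f.vars)
    {s : Fin d → ℕ} (hs : FamApery g s) {p q : Fin (d + m) → ℕ}
    (hp : FamFactorization g p s) (hq : FamFactorization g q s) : p = q := by
  classical
  by_contra hpq
  set P := Finsupp.equivFunOnFinite.symm p
  set Q := Finsupp.equivFunOnFinite.symm q
  have hPQ : P ≠ Q := by simpa [P, Q] using hpq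
  have hmem : monomial P (1 : k) - monomial Q 1 ∈ Ideal.span B := by
    rw [hspan, monomial_sub_monomial_mem_famIdeal_iff]
    simpa [P, Q] using hp.trans hq.symm
  obtain ⟨f, hfB, c, hc, hcP⟩ :=
    exists_le_of_mem_support_of_mem_ideal_span hmem (left_mem_support_monomial_sub_monomial hPQ)
  obtain ⟨a, b, rfl⟩ := hbin f hfB
  obtain ⟨j, hj⟩ := hextremal _ hfB
  have hab : ∑ i, a i • g i = ∑ i, b i • g i :=
    monomial_sub_monomial_mem_famIdeal_iff.1 (hspan ▸ Ideal.subset_span hfB)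
  have hvar : a (Fin.castAdd m j) ≠ 0 ∨ b (Fin.castAdd m j) ≠ 0 := by
    simpa using vars_monomial_sub_monomial_subset hj
  have hcp : ⇑c ≤ p := fun i => by simpa [P] using hcP i
  rcases Finset.mem_insert.1 (support_monomial_sub_monomial_subset hc) with rfl | hcb
  · have := hs.apply_castAdd_eq_zero_of_exchange hp hcp hab j
    omega
  · rw [Finset.mem_singleton.1 hcb] at hcp
    have := hs.apply_castAdd_eq_zero_of_exchange hp hcp hab.symm j
    omega

theorem SimplicialAffineSemigroup.pos_of_gen {d r : ℕ} (S : SimplicialAffineSemigroup d r)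
    (i : Fin (d + r)) : 0 < d := by
  refine Nat.pos_of_ne_zero fun hd => S.gen_ne_zero i (funext fun j => ?_)
  exact (Fin.cast hd j).elim0

end AffineSG

open AffineSG MvPolynomial in
theorem generic_implies_homogeneous_general {d r : ℕ} {k : Type} [Field k]
    (S : SimplicialAffineSemigroup d r)
    (B : Finset (MvPolynomial (Fin (d + r)) k))
    (hbin : ∀ f ∈ B, ∃ p q : Fin (d + r) →₀ ℕ, p ≠ q ∧
      f = MvPolynomial.monomial p 1 - MvPolynomial.monomial q 1)
    (hspan : Ideal.span (↑B : Set (MvPolynomial (Fin (d + r)) k)) = S.definingIdeal k)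
    (hgeneric : ∀ f ∈ B, ∀ j : Fin (d + r), j ∈ f.vars) :
    (∀ s : Fin d → ℕ, FamApery S.gen s →
      ∀ p q : Fin (d + r) → ℕ, FamFactorization S.gen p s → FamFactorization S.gen q s →
        p = q) ∧
      FamHomogeneous S.gen := by
  have hunique : ∀ s : Fin d → ℕ, FamApery S.gen s →
      ∀ p q : Fin (d + r) → ℕ, FamFactorization S.gen p s → FamFactorization S.gen q s →
        p = q := by
    intro s hs p q hp hq
    rcases isEmpty_or_nonempty (Fin (d + r)) with _ | ⟨⟨i⟩⟩
    · exact Subsingleton.elim p q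
    · refine hs.factorization_unique (B := ↑B) (fun f hf => ?_) hspan
        (fun f hf => ⟨⟨0, S.pos_of_gen i⟩, hgeneric f hf _⟩) hp hq
      obtain ⟨a, b, -, rfl⟩ := hbin f hf
      exact ⟨a, b, rfl⟩
  exact ⟨hunique, fun s hs _ p q hp hq => by rw [hunique s hs p q hp hq]⟩

open AffineSG MvPolynomial in
/-- If the defining ideal `I(S)` is generic — every variable lies in the support of every
binomial in a minimal binomial generating set — then every element of the Apéry set
`AP(S,E)` has a unique factorization; in particular `S` is homogeneous. -/
theorem generic_implies_homogeneous {d r : ℕ} {k : Type} [Field k]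
    (S : SimplicialAffineSemigroup d r)
    (B : Finset (MvPolynomial (Fin (d + r)) k))
    (hbin : ∀ f ∈ B, ∃ p q : Fin (d + r) →₀ ℕ, p ≠ q ∧
      f = MvPolynomial.monomial p 1 - MvPolynomial.monomial q 1)
    (hspan : Ideal.span (↑B : Set (MvPolynomial (Fin (d + r)) k)) = S.definingIdeal k)
    (hmin : ∀ f ∈ B,
      Ideal.span ((↑B : Set (MvPolynomial (Fin (d + r)) k)) \ {f}) ≠ S.definingIdeal k)
    (hgeneric : ∀ f ∈ B, ∀ j : Fin (d + r), j ∈ f.vars) :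
    (∀ s : Fin d → ℕ, FamApery S.gen s →
      ∀ p q : Fin (d + r) → ℕ, FamFactorization S.gen p s → FamFactorization S.gen q s →
        p = q) ∧
      FamHomogeneous S.gen :=
  generic_implies_homogeneous_general S B hbin hspan hgeneric
end
end

section
/- The defining ideal 𝔭 of the monomial curve defined by the numerical semigroup S minimally generated by the geometric sequence a^r, a^{r−1}b, …, ab^{r−1}, b^r is minimally generated by the r binomials P_1 = z_2^a − z_1^b, P_2 = z_3^a − z_2^b, …, P_r = z_{r+1}^a − z_r^b. -/
open MvPolynomial CategoryTheory

set_option maxHeartbeats 1000000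
set_option synthInstance.maxHeartbeats 400000

noncomputable section

/-- The defining ideal `𝔭` of the monomial curve given by the numerical semigroup minimally
generated by the geometric sequence `m_i = a^{r+1-i} b^{i-1}`, `i = 1, …, r+1`:
the kernel of `z_i ↦ t^{m_i}`. -/
noncomputable def geomKer (k : Type) [Field k] (a b r : ℕ) :
    Ideal (MvPolynomial (Fin (r + 1)) k) :=
  RingHom.ker (MvPolynomial.aeval
    (fun i : Fin (r + 1) =>
      (Polynomial.X : Polynomial k) ^ (a ^ (r - (i : ℕ)) * b ^ (i : ℕ))) :
        MvPolynomial (Fin (r + 1)) k →ₐ[k] Polynomial k)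

/-- The binomials `P_i = z_{i+1}^a − z_i^b`, `i = 1, …, r`. -/
noncomputable def geomP (k : Type) [Field k] (a b r : ℕ) (i : Fin r) :
    MvPolynomial (Fin (r + 1)) k :=
  MvPolynomial.X i.succ ^ a - MvPolynomial.X i.castSucc ^ b

/-! Modulo the binomials `z_{i+1}^a - z_i^b` every monomial reduces to one whose exponents of
`z_2, …, z_{r+1}` are all `< a`. As `gcd(a, b) = 1`, distinct reduced monomials have distinct
`t`-degrees `∑ u_j a^{r+1-j} b^{j-1}` (the exponent of `z_{r+1}` is read off modulo `a`, then
induct on `r`), so a reduced polynomial in `𝔭` vanishes and the binomials generate `𝔭`.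
For minimality, doubling the weights of `z_{i+1}, …, z_{r+1}` gives a monomial map whose kernel
contains every `P_j` with `j ≠ i` but not `P_i`. -/

open Finsupp (weight)

theorem Finsupp.prod_pow_pow_eq_pow_weight {σ M : Type*} [CommMonoid M] (x : M) (w : σ → ℕ)
    (u : σ →₀ ℕ) : (u.prod fun i e => (x ^ w i) ^ e) = x ^ weight w u := by
  simp only [Finsupp.prod, weight_apply, Finsupp.sum, smul_eq_mul, ← pow_mul, mul_comm (w _),
    Finset.prod_pow_eq_pow_sum]

namespace MvPolynomial

variable {σ k : Type*}

theorem aeval_X_pow_monomial [CommSemiring k] (w : σ → ℕ) (u : σ →₀ ℕ) (c : k) :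
    aeval (fun i => (Polynomial.X : Polynomial k) ^ w i) (monomial u c) =
      Polynomial.C c * Polynomial.X ^ weight w u := by
  rw [aeval_monomial, Finsupp.prod_pow_pow_eq_pow_weight, Polynomial.algebraMap_eq]

theorem coeff_aeval_X_pow_of_injOn [CommSemiring k] {w : σ → ℕ} {R : Set (σ →₀ ℕ)}
    (hw : Set.InjOn (weight w) R) {f : MvPolynomial σ k} (hf : ↑f.support ⊆ R) {u : σ →₀ ℕ}
    (hu : u ∈ R) :
    (aeval (fun i => (Polynomial.X : Polynomial k) ^ w i) f).coeff (weight w u) = coeff u f := by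
  conv_lhs => rw [f.as_sum]
  simp only [map_sum, Polynomial.finsetSum_coeff, aeval_X_pow_monomial,
    Polynomial.coeff_C_mul_X_pow]
  rw [Finset.sum_eq_single u]
  · rw [if_pos rfl]
  · exact fun v hv hvu => if_neg fun h => hvu (hw (hf hv) hu h.symm)
  · exact fun hu' => by rw [if_pos rfl, notMem_support_iff.mp hu']

theorem eq_zero_of_aeval_X_pow_eq_zero [CommSemiring k] {w : σ → ℕ} {R : Set (σ →₀ ℕ)}
    (hw : Set.InjOn (weight w) R) {f : MvPolynomial σ k} (hf : ↑f.support ⊆ R)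
    (h : aeval (fun i => (Polynomial.X : Polynomial k) ^ w i) f = 0) : f = 0 := by
  ext u
  by_cases hu : u ∈ f.support
  · rw [coeff_zero, ← coeff_aeval_X_pow_of_injOn hw hf (hf hu), h, Polynomial.coeff_zero]
  · exact notMem_support_iff.mp hu

theorem X_pow_sub_X_pow_mem_ker_aeval_X_pow_iff [CommRing k] [Nontrivial k] (w : σ → ℕ)
    (i j : σ) (m n : ℕ) :
    X i ^ m - X j ^ n ∈ RingHom.ker
        (aeval (fun l => (Polynomial.X : Polynomial k) ^ w l) : MvPolynomial σ k →ₐ[k] _) ↔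
      w i * m = w j * n := by
  rw [RingHom.mem_ker, map_sub, map_pow, map_pow, aeval_X, aeval_X, ← pow_mul, ← pow_mul,
    sub_eq_zero, Polynomial.X_pow_eq_monomial, Polynomial.X_pow_eq_monomial,
    Polynomial.monomial_left_inj one_ne_zero]

end MvPolynomial

theorem Nat.eq_and_eq_of_mul_add_mul_eq {a c x y s t : ℕ} (hco : Nat.Coprime a c) (hx : x < a)
    (hy : y < a) (h : a * s + x * c = a * t + y * c) : x = y ∧ s = t := by
  have hxy : x = y := by
    have hmul : a * s ≡ a * t [MOD a] := by
      simp only [Nat.ModEq, Nat.mul_mod_right]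
    exact ((hmul.add_left_cancel (congrArg (· % a) h)).cancel_right_of_coprime hco).eq_of_lt_of_lt
      hx hy
  subst hxy
  exact ⟨rfl, Nat.eq_of_mul_eq_mul_left (by omega) (Nat.add_right_cancel h)⟩

def geomWeight (a b r : ℕ) (j : Fin (r + 1)) : ℕ := a ^ (r - j) * b ^ (j : ℕ)

/-- Index `j : Fin (r + 1)` stands for the paper's `z_{j+1}`: the exponents of `z_2, …, z_{r+1}`
are below `a`. -/
def geomReduced (a r : ℕ) : Set (Fin (r + 1) →₀ ℕ) := {u | ∀ j, j ≠ 0 → u j < a}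

section GeomCurve

open MvPolynomial Ideal

variable {k : Type} [Field k] {a b r : ℕ}

theorem geomWeight_castSucc (j : Fin (r + 1)) :
    geomWeight a b (r + 1) j.castSucc = a * geomWeight a b r j := by
  rw [geomWeight, geomWeight, Fin.val_castSucc, Nat.sub_add_comm (Nat.lt_succ_iff.mp j.isLt),
    pow_succ]
  ring

theorem geomWeight_last : geomWeight a b (r + 1) (Fin.last (r + 1)) = b ^ (r + 1) := by
  simp [geomWeight]

theorem geomWeight_succ_mul (i : Fin r) :
    geomWeight a b r i.succ * a = geomWeight a b r i.castSucc * b := by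
  rw [geomWeight, geomWeight, Fin.val_succ, Fin.val_castSucc,
    show r - i = r - (i + 1) + 1 by omega, pow_succ, pow_succ]
  ring

theorem eq_of_sum_mul_geomWeight_eq (hco : Nat.Coprime a b) {u v : Fin (r + 1) → ℕ}
    (hu : ∀ j, j ≠ 0 → u j < a) (hv : ∀ j, j ≠ 0 → v j < a)
    (h : ∑ j, u j * geomWeight a b r j = ∑ j, v j * geomWeight a b r j) : u = v := by
  induction r with
  | zero => funext j; fin_cases j; simpa [geomWeight] using h
  | succ r ih =>
    simp only [Fin.sum_univ_castSucc (n := r + 1), geomWeight_castSucc, geomWeight_last,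
      mul_left_comm _ a, ← Finset.mul_sum] at h
    obtain ⟨hlast, hinit⟩ := Nat.eq_and_eq_of_mul_add_mul_eq (hco.pow_right _)
      (hu _ Fin.last_pos.ne') (hv _ Fin.last_pos.ne') h
    have hcast := ih (u := u ∘ Fin.castSucc) (v := v ∘ Fin.castSucc)
      (fun j hj => hu _ (Fin.castSucc_ne_zero_iff.mpr hj))
      (fun j hj => hv _ (Fin.castSucc_ne_zero_iff.mpr hj)) hinit
    funext j
    exact Fin.lastCases hlast (fun i => congrFun hcast i) j

theorem geomWeight_injOn (hco : Nat.Coprime a b) :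
    Set.InjOn (weight (geomWeight a b r)) (geomReduced a r) := fun u hu v hv h => by
  simp only [Finsupp.weight_eq_sum, smul_eq_mul] at h
  exact DFunLike.coe_injective (eq_of_sum_mul_geomWeight_eq hco hu hv h)

theorem geomP_mem_ker_aeval_iff (w : Fin (r + 1) → ℕ) (i : Fin r) :
    geomP k a b r i ∈ RingHom.ker
        (aeval (fun l => (Polynomial.X : Polynomial k) ^ w l) : MvPolynomial _ k →ₐ[k] _) ↔
      w i.succ * a = w i.castSucc * b :=
  X_pow_sub_X_pow_mem_ker_aeval_X_pow_iff w _ _ a b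

theorem span_geomP_le_geomKer : span (Set.range (geomP k a b r)) ≤ geomKer k a b r :=
  span_le.mpr <| Set.range_subset_iff.mpr fun i =>
    (geomP_mem_ker_aeval_iff _ i).mpr (geomWeight_succ_mul i)

theorem monomial_mul_geomP (s : Fin (r + 1) →₀ ℕ) (i : Fin r) :
    monomial s (1 : k) * geomP k a b r i =
      monomial (s + Finsupp.single i.succ a) 1 - monomial (s + Finsupp.single i.castSucc b) 1 := by
  rw [geomP, mul_sub, X_pow_eq_monomial, X_pow_eq_monomial, monomial_mul, monomial_mul, one_mul]

/-- Rewriting `z_{i+1}^a ↦ z_i^b` decreases `∑ u_j (b+1)^j`, so it terminates. -/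
theorem exists_geomReduced_monomial_sub_mem (ha : 0 < a) (u : Fin (r + 1) →₀ ℕ) :
    ∃ v ∈ geomReduced a r,
      monomial u (1 : k) - monomial v 1 ∈ span (Set.range (geomP k a b r)) := by
  induction hN : weight (fun j : Fin (r + 1) => (b + 1) ^ (j : ℕ)) u using Nat.strong_induction_on
    generalizing u with
  | _ N ih =>
  by_cases hu : u ∈ geomReduced a r
  · exact ⟨u, hu, by rw [sub_self]; exact zero_mem _⟩
  simp only [geomReduced, Set.mem_ofPred_eq, not_forall, not_lt] at hu
  obtain ⟨j, hj, hja⟩ := hu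
  obtain ⟨i, rfl⟩ := Fin.exists_succ_eq.mpr hj
  obtain ⟨s, rfl⟩ : ∃ s, u = s + Finsupp.single i.succ a :=
    ⟨u - Finsupp.single i.succ a, (tsub_add_cancel_of_le (Finsupp.single_le_iff.mpr hja)).symm⟩
  have hlt : weight (fun j : Fin (r + 1) => (b + 1) ^ (j : ℕ)) (s + Finsupp.single i.castSucc b) <
      N := by
    rw [← hN, map_add, map_add, Finsupp.weight_single, Finsupp.weight_single, smul_eq_mul,
      smul_eq_mul, Fin.val_succ, Fin.val_castSucc, pow_succ]
    have : b * (b + 1) ^ (i : ℕ) < (b + 1) ^ (i : ℕ) * (b + 1) := by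
      rw [mul_comm]; exact Nat.mul_lt_mul_of_pos_left (Nat.lt_succ_self b) (by positivity)
    exact Nat.add_lt_add_left (this.trans_le (Nat.le_mul_of_pos_left _ ha)) _
  obtain ⟨v, hv, hmem⟩ := ih _ hlt _ rfl
  refine ⟨v, hv, ?_⟩
  rw [← sub_add_sub_cancel _ (monomial (s + Finsupp.single i.castSucc b) 1), ← monomial_mul_geomP]
  exact add_mem (mul_mem_left _ _ (subset_span ⟨i, rfl⟩)) hmem

theorem exists_geomReduced_sub_mem (ha : 0 < a) (f : MvPolynomial (Fin (r + 1)) k) :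
    ∃ g : MvPolynomial (Fin (r + 1)) k,
      ↑g.support ⊆ geomReduced a r ∧ f - g ∈ span (Set.range (geomP k a b r)) := by
  induction f using MvPolynomial.induction_on' with
  | monomial u c =>
    obtain ⟨v, hv, hmem⟩ := exists_geomReduced_monomial_sub_mem (k := k) (b := b) ha u
    refine ⟨monomial v c, fun w hw => ?_, ?_⟩
    · rwa [Finset.mem_singleton.mp (support_monomial_subset (Finset.mem_coe.mp hw))]
    · rw [← mul_one c, ← C_mul_monomial, ← C_mul_monomial, ← mul_sub]
      exact mul_mem_left _ _ hmem
  | add p q hp hq =>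
    obtain ⟨gp, hgp, hp⟩ := hp
    obtain ⟨gq, hgq, hq⟩ := hq
    refine ⟨gp + gq, fun w hw => ?_, by rw [add_sub_add_comm]; exact add_mem hp hq⟩
    exact (Finset.mem_union.mp (support_add hw)).elim (fun h => hgp h) (fun h => hgq h)

theorem span_geomP_eq_geomKer (ha : 0 < a) (hco : Nat.Coprime a b) :
    span (Set.range (geomP k a b r)) = geomKer k a b r := by
  refine le_antisymm span_geomP_le_geomKer fun f hf => ?_
  obtain ⟨g, hg, hfg⟩ := exists_geomReduced_sub_mem ha f
  have hg_mem : g ∈ geomKer k a b r := by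
    simpa using sub_mem hf (span_geomP_le_geomKer hfg)
  rwa [eq_zero_of_aeval_X_pow_eq_zero (geomWeight_injOn hco) hg hg_mem, sub_zero] at hfg

theorem span_diff_geomP_ne_geomKer (ha : 0 < a) (hb : 0 < b) (i : Fin r) :
    span (Set.range (geomP k a b r) \ {geomP k a b r i}) ≠ geomKer k a b r := by
  set w : Fin (r + 1) → ℕ := fun l => (if l ≤ i.castSucc then 1 else 2) * geomWeight a b r l
  have hle : span (Set.range (geomP k a b r) \ {geomP k a b r i}) ≤
      RingHom.ker (aeval fun l => (Polynomial.X : Polynomial k) ^ w l) := by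
    refine span_le.mpr ?_
    rintro _ ⟨⟨j, rfl⟩, hj⟩
    have hji : (j : ℕ) ≠ i := fun h => hj (congrArg _ (Fin.ext h))
    have hcond : (j.succ ≤ i.castSucc) ↔ (j.castSucc ≤ i.castSucc) := by
      simp only [Fin.le_iff_val_le_val, Fin.val_succ, Fin.val_castSucc]; omega
    rw [SetLike.mem_coe, geomP_mem_ker_aeval_iff]
    simp only [w, if_congr hcond rfl rfl, mul_assoc, geomWeight_succ_mul]
  have hi : geomP k a b r i ∉ RingHom.ker (aeval fun l => (Polynomial.X : Polynomial k) ^ w l) := by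
    have hpos : 0 < geomWeight a b r i.castSucc * b := by unfold geomWeight; positivity
    have hnot : ¬ i.succ ≤ i.castSucc := not_le.mpr Fin.castSucc_lt_succ
    rw [geomP_mem_ker_aeval_iff]
    simp only [w, le_refl, if_true, hnot, if_false, mul_assoc, geomWeight_succ_mul]
    omega
  exact fun h => hi (hle (h ▸ span_geomP_le_geomKer (subset_span ⟨i, rfl⟩)))

end GeomCurve

open AffineSG MvPolynomial in
theorem geom_minimally_generated_general {k : Type} [Field k] (a b r : ℕ)
    (ha : 0 < a) (hab : a < b) (hco : Nat.Coprime a b) :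
    Ideal.span (Set.range (geomP k a b r)) = geomKer k a b r ∧
      ∀ i : Fin r,
        Ideal.span (Set.range (geomP k a b r) \ {geomP k a b r i}) ≠ geomKer k a b r :=
  ⟨span_geomP_eq_geomKer ha hco, span_diff_geomP_ne_geomKer ha (ha.trans hab)⟩

open AffineSG MvPolynomial in
/-- The defining ideal `𝔭` of the monomial curve given by the numerical semigroup minimally
generated by the geometric sequence `a^r, a^{r-1}b, …, ab^{r-1}, b^r` is minimally generated
by the binomials `P_1 = z_2^a − z_1^b, …, P_r = z_{r+1}^a − z_r^b`. -/
theorem geom_minimally_generated {k : Type} [Field k] (a b r : ℕ)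
    (ha : 0 < a) (hab : a < b) (hco : Nat.Coprime a b) (hr : 0 < r) :
    Ideal.span (Set.range (geomP k a b r)) = geomKer k a b r ∧
      ∀ i : Fin r,
        Ideal.span (Set.range (geomP k a b r) \ {geomP k a b r i}) ≠ geomKer k a b r :=
  geom_minimally_generated_general a b r ha hab hco
end
end
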